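/- (Strict bound for the vertical derivative of the stream function, negative vorticity case.) Let γ < 0. Suppose η : ℝ×[0,1] → ℝ is continuously differentiable with η_x² + η_y² > 0 everywhere on the closed strip, and Ψ : ℝ×[0,1] → ℝ is bounded, continuously differentiable on the closed strip, twice continuously differentiable in R, satisfies ΔΨ = γ·(η_x² + η_y²) in R, Ψ(x,1) = 1 − γ/2 for all x, and Ψ(x,0) = 0 for all x. Then ∂_y Ψ(x,1) < 1 − γ/2 for every x ∈ ℝ. -/

import Mathlib

/-- The closed strip `ℝ × [0,1]`. -/
def strip : Set (ℝ × ℝ) := {p : ℝ × ℝ | p.2 ∈ Set.Icc (0 : ℝ) 1}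

/-- The open strip `R = ℝ × (0,1)`. -/
def stripO : Set (ℝ × ℝ) := {p : ℝ × ℝ | p.2 ∈ Set.Ioo (0 : ℝ) 1}

/-- Partial derivative in the first (horizontal) variable, taken within the closed strip
(at interior points it agrees with the usual partial derivative; on the boundary it is
the one-sided partial derivative). -/
noncomputable def pdx (f : ℝ × ℝ → ℝ) (p : ℝ × ℝ) : ℝ := fderivWithin ℝ f strip p (1, 0)

/-- Partial derivative in the second (vertical) variable, taken within the closed strip. -/
noncomputable def pdy (f : ℝ × ℝ → ℝ) (p : ℝ × ℝ) : ℝ := fderivWithin ℝ f strip p (0, 1)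

/-!
Since `ΔΨ = γ |∇η|² < 0`, the function `Ψ` is strictly superharmonic, so it has no interior local
minimum. Comparing `Ψ - (1 - γ/2) y` with the harmonic barriers `ε ((x - x₀)² + y (1 - y))` on
ever wider boxes (Phragmén–Lindelöf, using that `Ψ` is bounded) gives `Ψ ≥ (1 - γ/2) y` on the
whole strip. Near a point `(x₀, 1)` of `Γ` the Laplacian is bounded away from zero, `ΔΨ ≤ -m`,
and a Hopf-type quadratic barrier on a small box below `(x₀, 1)` improves this to
`Ψ(x₀, y) ≥ (1 - γ/2) y + (m/64) (1 - y)`; since `Ψ(x₀, 1) = 1 - γ/2`, the one-sided difference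
quotient gives `∂_y Ψ(x₀, 1) ≤ 1 - γ/2 - m/64`.
-/

open Filter Topology Set

theorem IsLocalMin.nonneg_of_hasDerivAt {g g' : ℝ → ℝ} {x A : ℝ} (hmin : IsLocalMin g x)
    (hg : ∀ᶠ t in 𝓝 x, HasDerivAt g (g' t) t) (hg' : HasDerivAt g' A x) : 0 ≤ A := by
  have hdg : deriv g =ᶠ[𝓝 x] g' := hg.mono fun t ht => ht.deriv
  have hA : deriv (deriv g) x = A := hdg.deriv_eq.trans hg'.deriv
  by_contra! hneg
  -- `g'' < 0` makes `x` a local maximum as well, so `g` is locally constant and `g'' = 0`.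
  have hmax : IsLocalMax g x :=
    isLocalMax_of_deriv_deriv_neg (hA ▸ hneg) hmin.deriv_eq_zero hg.self_of_nhds.continuousAt
  have hconst : g =ᶠ[𝓝 x] fun _ => g x := by
    filter_upwards [hmin, hmax] with t hge hle using le_antisymm hle hge
  have : deriv (deriv g) x = 0 := by simp [hconst.deriv.deriv_eq]
  linarith

theorem IsCompact.forall_nonneg_of_not_isLocalMin {X : Type*} [TopologicalSpace X] {K : Set X}
    {u : X → ℝ} (hK : IsCompact K) (hu : ContinuousOn u K)
    (hmin : ∀ p ∈ interior K, ¬ IsLocalMin u p) (hbd : ∀ p ∈ K \ interior K, 0 ≤ u p) :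
    ∀ p ∈ K, 0 ≤ u p := by
  intro p hp
  obtain ⟨q, hqK, hq⟩ := hK.exists_isMinOn ⟨p, hp⟩ hu
  have hq_bd : q ∉ interior K := fun hqi =>
    hmin q hqi (hq.isLocalMin (mem_interior_iff_mem_nhds.1 hqi))
  exact (hbd q ⟨hqK, hq_bd⟩).trans (hq hp)

theorem isOpen_stripO : IsOpen stripO := isOpen_Ioo.preimage continuous_snd

theorem stripO_subset_strip : stripO ⊆ strip := fun _ hp => Ioo_subset_Icc_self hp

theorem uniqueDiffOn_strip : UniqueDiffOn ℝ strip := by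
  have : strip = univ ×ˢ Icc 0 1 := by ext; simp [strip]
  rw [this]
  exact uniqueDiffOn_univ.prod (uniqueDiffOn_Icc one_pos)

theorem fderivWithin_strip {f : ℝ × ℝ → ℝ} {p : ℝ × ℝ} (hp : p ∈ stripO) :
    fderivWithin ℝ f strip p = fderiv ℝ f p :=
  fderivWithin_of_mem_nhds (mem_of_superset (isOpen_stripO.mem_nhds hp) stripO_subset_strip)

theorem differentiableOn_fderivWithin_strip_apply {f : ℝ × ℝ → ℝ}
    (hf : ContDiffOn ℝ 2 f stripO) (v : ℝ × ℝ) :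
    DifferentiableOn ℝ (fun p => fderivWithin ℝ f strip p v) stripO := by
  have hf' : ContDiffOn ℝ 1 (fderiv ℝ f) stripO :=
    hf.fderiv_of_isOpen isOpen_stripO (by norm_num)
  exact ((hf'.differentiableOn one_ne_zero).clm_apply (differentiableOn_const v)).congr
    fun p hp => by rw [fderivWithin_strip hp]

theorem hasDerivAt_pdx {f : ℝ × ℝ → ℝ} {p : ℝ × ℝ}
    (hf : DifferentiableOn ℝ f stripO) (hp : p ∈ stripO) :
    HasDerivAt (fun s => f (s, p.2)) (pdx f p) p.1 := by
  have hfp := (hf.differentiableAt (isOpen_stripO.mem_nhds hp)).hasFDerivAt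
  rw [pdx, fderivWithin_strip hp]
  exact hfp.comp_hasDerivAt p.1 ((hasDerivAt_id p.1).prodMk (hasDerivAt_const p.1 p.2))

theorem hasDerivAt_pdy {f : ℝ × ℝ → ℝ} {p : ℝ × ℝ}
    (hf : DifferentiableOn ℝ f stripO) (hp : p ∈ stripO) :
    HasDerivAt (fun t => f (p.1, t)) (pdy f p) p.2 := by
  have hfp := (hf.differentiableAt (isOpen_stripO.mem_nhds hp)).hasFDerivAt
  rw [pdy, fderivWithin_strip hp]
  exact hfp.comp_hasDerivAt p.2 ((hasDerivAt_const p.2 p.1).prodMk (hasDerivAt_id p.2))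

theorem not_isLocalMin_of_laplacian_neg {f : ℝ × ℝ → ℝ} {α β : ℝ → ℝ} {p : ℝ × ℝ}
    (hf : ContDiffOn ℝ 2 f stripO) (hα : ContDiff ℝ 2 α) (hβ : ContDiff ℝ 2 β)
    (hp : p ∈ stripO)
    (hΔ : pdx (pdx f) p + pdy (pdy f) p + deriv (deriv α) p.1 + deriv (deriv β) p.2 < 0) :
    ¬ IsLocalMin (fun q => f q + α q.1 + β q.2) p := by
  intro hmin
  have hf1 : DifferentiableOn ℝ f stripO := hf.differentiableOn (by norm_num)
  have hf2x : DifferentiableOn ℝ (pdx f) stripO := differentiableOn_fderivWithin_strip_apply hf _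
  have hf2y : DifferentiableOn ℝ (pdy f) stripO := differentiableOn_fderivWithin_strip_apply hf _
  have hα1 : Differentiable ℝ α := hα.differentiable (by norm_num)
  have hα2 : Differentiable ℝ (deriv α) := hα.differentiable_deriv_two
  have hβ1 : Differentiable ℝ β := hβ.differentiable (by norm_num)
  have hβ2 : Differentiable ℝ (deriv β) := hβ.differentiable_deriv_two
  have hx : 0 ≤ pdx (pdx f) p + deriv (deriv α) p.1 := by
    refine (hmin.comp_continuous (g := fun s => (s, p.2)) (by fun_prop)).nonneg_of_hasDerivAt
      (g' := fun s => pdx f (s, p.2) + deriv α s) (.of_forall fun s => ?_)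
      ((hasDerivAt_pdx hf2x hp).add (hα2 p.1).hasDerivAt)
    exact ((hasDerivAt_pdx (p := (s, p.2)) hf1 hp).add (hα1 s).hasDerivAt).add_const (β p.2)
  have hy : 0 ≤ pdy (pdy f) p + deriv (deriv β) p.2 := by
    refine (hmin.comp_continuous (g := fun t => (p.1, t)) (by fun_prop)).nonneg_of_hasDerivAt
      (g' := fun t => pdy f (p.1, t) + deriv β t) ?_
      ((hasDerivAt_pdy hf2y hp).add (hβ2 p.2).hasDerivAt)
    filter_upwards [isOpen_Ioo.mem_nhds hp] with t ht
    exact ((hasDerivAt_pdy (p := (p.1, t)) hf1 ht).add_const (α p.1)).add (hβ1 t).hasDerivAt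
  linarith

theorem nonneg_of_laplacian_neg_on_box {f : ℝ × ℝ → ℝ} {α β : ℝ → ℝ}
    {a b c d : ℝ} (hc : 0 ≤ c) (hd : d ≤ 1) (hfc : ContinuousOn f (Icc a b ×ˢ Icc c d))
    (hf : ContDiffOn ℝ 2 f stripO) (hα : ContDiff ℝ 2 α) (hβ : ContDiff ℝ 2 β)
    (hΔ : ∀ p ∈ Ioo a b ×ˢ Ioo c d,
      pdx (pdx f) p + pdy (pdy f) p + deriv (deriv α) p.1 + deriv (deriv β) p.2 < 0)
    (hsides : ∀ t ∈ Icc c d, 0 ≤ f (a, t) + α a + β t ∧ 0 ≤ f (b, t) + α b + β t)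
    (hends : ∀ s ∈ Icc a b, 0 ≤ f (s, c) + α s + β c ∧ 0 ≤ f (s, d) + α s + β d) :
    ∀ p ∈ Icc a b ×ˢ Icc c d, 0 ≤ f p + α p.1 + β p.2 := by
  have hint : interior (Icc a b ×ˢ Icc c d) = Ioo a b ×ˢ Ioo c d := by
    rw [interior_prod_eq, interior_Icc, interior_Icc]
  refine (isCompact_Icc.prod isCompact_Icc).forall_nonneg_of_not_isLocalMin
    ((hfc.add (hα.continuous.comp continuous_fst).continuousOn).add
      (hβ.continuous.comp continuous_snd).continuousOn) (fun p hp => ?_) ?_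
  · rw [hint] at hp
    exact not_isLocalMin_of_laplacian_neg hf hα hβ ⟨hc.trans_lt hp.2.1, hp.2.2.trans_le hd⟩
      (hΔ p hp)
  · rintro ⟨s, t⟩ ⟨⟨⟨hs₁, hs₂⟩, ht₁, ht₂⟩, hbd⟩
    rw [hint] at hbd
    rcases eq_or_ne s a with rfl | hsa
    · exact (hsides t ⟨ht₁, ht₂⟩).1
    rcases eq_or_ne s b with rfl | hsb
    · exact (hsides t ⟨ht₁, ht₂⟩).2
    rcases eq_or_ne t c with rfl | htc
    · exact (hends s ⟨hs₁, hs₂⟩).1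
    rcases eq_or_ne t d with rfl | htd
    · exact (hends s ⟨hs₁, hs₂⟩).2
    exact absurd ⟨⟨hs₁.lt_of_ne' hsa, hs₂.lt_of_ne hsb⟩, ht₁.lt_of_ne' htc, ht₂.lt_of_ne htd⟩
      hbd

theorem deriv_deriv_sq_sub_add (a t₀ b e t : ℝ) :
    deriv (deriv fun s => a * (s - t₀) ^ 2 + b * s + e) t = 2 * a := by
  have h : deriv (fun s => a * (s - t₀) ^ 2 + b * s + e) =
      fun s => 2 * a * (s - t₀) + b := by
    ext s
    exact ((((hasDerivAt_id s).sub_const t₀).pow 2 |>.const_mul a).add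
      ((hasDerivAt_id s).const_mul b) |>.add_const e).deriv.trans (by simp; ring)
  rw [h]
  exact (((hasDerivAt_id t).sub_const t₀).const_mul (2 * a) |>.add_const b).deriv.trans (by simp)

theorem deriv_deriv_sq_sub (a t₀ t : ℝ) : deriv (deriv fun s => a * (s - t₀) ^ 2) t = 2 * a := by
  simpa using deriv_deriv_sq_sub_add a t₀ 0 0 t

theorem mul_snd_le_of_laplacian_neg {Ψ : ℝ × ℝ → ℝ} {c : ℝ}
    (hΨc : ContinuousOn Ψ strip) (hΨ : ContDiffOn ℝ 2 Ψ stripO)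
    (hΔ : ∀ p ∈ stripO, pdx (pdx Ψ) p + pdy (pdy Ψ) p < 0)
    (hbdd : BddBelow (Ψ '' strip)) (h₀ : ∀ x, 0 ≤ Ψ (x, 0)) (h₁ : ∀ x, c ≤ Ψ (x, 1)) :
    ∀ p ∈ strip, c * p.2 ≤ Ψ p := by
  obtain ⟨L, hL₀, hL⟩ : ∃ L, 0 ≤ L ∧ ∀ q ∈ strip, -L ≤ Ψ q - c * q.2 := by
    obtain ⟨K, hK⟩ := hbdd
    refine ⟨|K| + |c|, by positivity, fun q hq => ?_⟩
    have hKq : K ≤ Ψ q := hK ⟨q, hq, rfl⟩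
    have hcq : c * q.2 ≤ |c| := calc
      c * q.2 ≤ |c| * q.2 := mul_le_mul_of_nonneg_right (le_abs_self c) hq.1
      _ ≤ |c| := mul_le_of_le_one_right (abs_nonneg c) hq.2
    linarith [neg_abs_le K]
  intro p hp
  by_contra! hlt
  set ε := c * p.2 - Ψ p
  have hε₀ : 0 < ε := by linarith
  set R := L / ε + 1 with hR
  have hR₁ : 1 ≤ R := by have := div_nonneg hL₀ hε₀.le; linarith
  have hεR : L ≤ ε * R ^ 2 := by
    have : ε * R = L + ε := by rw [hR]; field_simp
    nlinarith
  -- Comparison on `[p.1 - R, p.1 + R] × [0, 1]` with the harmonic barrier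
  -- `ε ((x - p.1)² + y (1 - y))`, which dominates `L` on the vertical sides.
  have hbox := nonneg_of_laplacian_neg_on_box (a := p.1 - R) (b := p.1 + R) le_rfl le_rfl
    (hΨc.mono fun q hq => hq.2) hΨ (α := fun s => ε * (s - p.1) ^ 2)
    (β := fun t => -ε * (t - 1 / 2) ^ 2 + -c * t + ε / 4) (by fun_prop) (by fun_prop)
    (fun q hq => by
      rw [deriv_deriv_sq_sub, deriv_deriv_sq_sub_add]
      linarith [hΔ q hq.2])
    (fun t ht => by
      have hbar : 0 ≤ -ε * (t - 1 / 2) ^ 2 + ε / 4 := by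
        nlinarith [mul_nonneg hε₀.le (mul_nonneg ht.1 (sub_nonneg.2 ht.2))]
      have h₁ := hL (p.1 - R, t) ht
      have h₂ := hL (p.1 + R, t) ht
      simp only [sub_sub_cancel_left, add_sub_cancel_left, neg_sq] at h₁ h₂ ⊢
      constructor <;> linarith)
    (fun s _ => ⟨by nlinarith [h₀ s], by nlinarith [h₁ s]⟩)
    p ⟨⟨by linarith, by linarith⟩, hp⟩
  nlinarith [hp.1, hp.2]

theorem pdy_le_of_laplacian_le {Ψ : ℝ × ℝ → ℝ} {x₀ c m : ℝ} (hm : 0 < m)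
    (hΨ₁ : ContDiffOn ℝ 1 Ψ strip) (hΨ₂ : ContDiffOn ℝ 2 Ψ stripO)
    (hΔ : ∀ p ∈ Ioo (x₀ - 1 / 4) (x₀ + 1 / 4) ×ˢ Ioo (3 / 4 : ℝ) 1,
      pdx (pdx Ψ) p + pdy (pdy Ψ) p ≤ -m)
    (hlow : ∀ p ∈ strip, c * p.2 ≤ Ψ p) (htop : Ψ (x₀, 1) = c) :
    pdy Ψ (x₀, 1) ≤ c - m / 64 := by
  have hstrip : ∀ s, ∀ t ∈ Icc (3 / 4 : ℝ) 1, (s, t) ∈ strip :=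
    fun s t ht => ⟨by linarith [ht.1], ht.2⟩
  -- Hopf barrier: `b = m/8 (x - x₀)² + m/8 (1 - y)² - m/32 (1 - y)` has `Δb = m/2 < m` and
  -- `b ≥ 0` on the boundary of `[x₀ - 1/4, x₀ + 1/4] × [3/4, 1]`, so `Ψ - c y + b ≥ 0` there.
  have hbox := nonneg_of_laplacian_neg_on_box (a := x₀ - 1 / 4) (b := x₀ + 1 / 4)
    (c := 3 / 4) (d := 1) (by norm_num) le_rfl
    (hΨ₁.continuousOn.mono fun q hq => hstrip _ _ hq.2) hΨ₂
    (α := fun s => m / 8 * (s - x₀) ^ 2)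
    (β := fun t => m / 8 * (t - 1) ^ 2 + (m / 32 - c) * t + -(m / 32))
    (by fun_prop) (by fun_prop)
    (fun q hq => by
      rw [deriv_deriv_sq_sub, deriv_deriv_sq_sub_add]
      linarith [hΔ q hq])
    (fun t ht => by
      have h₁ := hlow _ (hstrip (x₀ - 1 / 4) t ht)
      have h₂ := hlow _ (hstrip (x₀ + 1 / 4) t ht)
      dsimp only at h₁ h₂ ⊢
      constructor <;> nlinarith [ht.1, ht.2])
    (fun s _ => by
      have h₁ := hlow _ (hstrip s (3 / 4) ⟨le_rfl, by norm_num⟩)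
      have h₂ := hlow _ (hstrip s 1 ⟨by norm_num, le_rfl⟩)
      dsimp only at h₁ h₂ ⊢
      constructor <;> nlinarith [sq_nonneg (s - x₀)])
  have hslope : ∀ t ∈ Ico (7 / 8 : ℝ) 1, slope (fun t => Ψ (x₀, t)) 1 t ≤ c - m / 64 := by
    intro t ht
    have h := hbox (x₀, t) ⟨⟨by linarith, by linarith⟩, by linarith [ht.1], ht.2.le⟩
    rw [sub_self, sq, mul_zero, mul_zero, add_zero] at h
    rw [slope_def_field, htop, div_le_iff_of_neg (by linarith [ht.2])]
    nlinarith [mul_nonneg (mul_nonneg hm.le (sub_nonneg.2 ht.2.le)) (sub_nonneg.2 ht.1)]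
  have hderiv : HasDerivWithinAt (fun t => Ψ (x₀, t)) (pdy Ψ (x₀, 1)) (Ico (7 / 8) 1) 1 := by
    have hΨ := (hΨ₁.differentiableOn one_ne_zero (x₀, 1) ⟨zero_le_one, le_rfl⟩).hasFDerivWithinAt
    have hvert : HasDerivAt (fun t : ℝ => (x₀, t)) (0, 1) 1 :=
      (hasDerivAt_const _ x₀).prodMk (hasDerivAt_id _)
    exact hΨ.comp_hasDerivWithinAt 1 hvert.hasDerivWithinAt
      fun t ht => hstrip x₀ t ⟨by linarith [ht.1], ht.2.le⟩
  have : (𝓝[Ico (7 / 8 : ℝ) 1] 1).NeBot := right_nhdsWithin_Ico_neBot (by norm_num)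
  exact le_of_tendsto ((hasDerivWithinAt_iff_tendsto_slope' (by simp)).1 hderiv)
    (eventually_nhdsWithin_of_forall hslope)

theorem exists_pos_le_pdx_sq_add_pdy_sq {η : ℝ × ℝ → ℝ} (hη : ContDiffOn ℝ 1 η strip)
    (hgrad : ∀ p ∈ strip, 0 < (pdx η p) ^ 2 + (pdy η p) ^ 2) {K : Set (ℝ × ℝ)}
    (hK : IsCompact K) (hKs : K ⊆ strip) :
    ∃ μ, 0 < μ ∧ ∀ p ∈ K, μ ≤ (pdx η p) ^ 2 + (pdy η p) ^ 2 := by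
  have h := hη.continuousOn_fderivWithin uniqueDiffOn_strip le_rfl
  have hcont : ContinuousOn (fun p => (pdx η p) ^ 2 + (pdy η p) ^ 2) strip :=
    ((h.clm_apply continuousOn_const).pow 2).add ((h.clm_apply continuousOn_const).pow 2)
  exact hK.exists_forall_le' (hcont.mono hKs) fun p hp => hgrad p (hKs hp)

/-- Strict bound for the vertical derivative of the stream function (negative vorticity):
if `γ < 0`, `η` is `C¹` on the closed strip with nonvanishing gradient, and `Ψ` is
bounded, `C¹` on the closed strip, `C²` in the open strip, satisfies
`ΔΨ = γ(η_x² + η_y²)` in `R`, `Ψ = 1 − γ/2` on `Γ` and `Ψ = 0` on `B`, then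
`∂_yΨ(x,1) < 1 − γ/2` for every `x`. -/
theorem stmt_18 (γ : ℝ) (hγ : γ < 0) (η Ψ : ℝ × ℝ → ℝ)
    (hηC : ContDiffOn ℝ 1 η strip)
    (hηgrad : ∀ p ∈ strip, 0 < (pdx η p) ^ 2 + (pdy η p) ^ 2)
    (hΨbd : ∃ K : ℝ, ∀ p ∈ strip, |Ψ p| ≤ K)
    (hΨC1 : ContDiffOn ℝ 1 Ψ strip)
    (hΨC2 : ContDiffOn ℝ 2 Ψ stripO)
    (hΔ : ∀ p ∈ stripO, pdx (pdx Ψ) p + pdy (pdy Ψ) p = γ * ((pdx η p) ^ 2 + (pdy η p) ^ 2))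
    (hΓ : ∀ x : ℝ, Ψ (x, 1) = 1 - γ / 2)
    (hB : ∀ x : ℝ, Ψ (x, 0) = 0) :
    ∀ x : ℝ, pdy Ψ (x, 1) < 1 - γ / 2 := by
  intro x₀
  have hbdd : BddBelow (Ψ '' strip) := by
    obtain ⟨K, hK⟩ := hΨbd
    exact ⟨-K, by rintro _ ⟨p, hp, rfl⟩; exact (abs_le.1 (hK p hp)).1⟩
  have hΔneg : ∀ p ∈ stripO, pdx (pdx Ψ) p + pdy (pdy Ψ) p < 0 := fun p hp =>
    (hΔ p hp).trans_lt (mul_neg_of_neg_of_pos hγ (hηgrad p (stripO_subset_strip hp)))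
  have hlow := mul_snd_le_of_laplacian_neg hΨC1.continuousOn hΨC2 hΔneg hbdd
    (fun x => (hB x).ge) (fun x => (hΓ x).ge)
  obtain ⟨μ, hμ, hμQ⟩ := exists_pos_le_pdx_sq_add_pdy_sq hηC hηgrad
    (K := Icc (x₀ - 1 / 4) (x₀ + 1 / 4) ×ˢ Icc (3 / 4) 1) (isCompact_Icc.prod isCompact_Icc)
    fun q hq => ⟨by linarith [hq.2.1], hq.2.2⟩
  have hΔQ : ∀ p ∈ Ioo (x₀ - 1 / 4) (x₀ + 1 / 4) ×ˢ Ioo (3 / 4 : ℝ) 1,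
      pdx (pdx Ψ) p + pdy (pdy Ψ) p ≤ -(-γ * μ) := fun p hp => by
    rw [hΔ p ⟨by linarith [hp.2.1], hp.2.2⟩, neg_mul, neg_neg]
    exact mul_le_mul_of_nonpos_left
      (hμQ p (prod_mono Ioo_subset_Icc_self Ioo_subset_Icc_self hp)) hγ.le
  have hm : 0 < -γ * μ := mul_pos (neg_pos.2 hγ) hμ
  have := pdy_le_of_laplacian_le hm hΨC1 hΨC2 hΔQ hlow (hΓ x₀)
  linarith
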